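/- arXiv:2412.13485 — 8 statements merged into one kernel-verified Lean document; each statement's English description precedes it below -/
import Mathlib

section
/- Let G be a K4-free simple graph on n vertices and Z0 a triangle-free induced subgraph of G with |Z0| ≥ (2/3)n. Then e(G) ≤ |Z0|·(n − (3/4)|Z0|). -/
/-! Let `Z` be a largest triangle-free vertex set, so `|Z| ≥ |Z0|`. As `G` is `K₄`-free, every
neighbourhood is triangle-free, hence every degree is at most `|Z|`. Bounding the edges inside `Z`
by Mantel's theorem and those meeting `V \ Z` by degrees gives
`e(G) ≤ |Z|²/4 + (n - |Z|)|Z| = |Z|(n - 3|Z|/4)`, and `x ↦ x(n - 3x/4)` is decreasing for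
`x ≥ 2n/3`. -/

open Finset

namespace SimpleGraph

variable {V : Type*} {G : SimpleGraph V}

theorem CliqueFree.cliqueFreeOn_neighborSet {r : ℕ} (hG : G.CliqueFree (r + 1)) (v : V) :
    G.CliqueFreeOn (G.neighborSet v) r := by
  simpa using CliqueFreeOn.of_succ (G := G) ((cliqueFreeOn_univ G).2 hG) (Set.mem_univ v)

theorem CliqueFree.degree_le_of_forall_cliqueFreeOn_card_le [Fintype V] [DecidableRel G.Adj]
    {r m : ℕ} (hG : G.CliqueFree (r + 1)) (hm : ∀ s : Finset V, G.CliqueFreeOn s r → #s ≤ m)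
    (v : V) :
    G.degree v ≤ m := by
  rw [← card_neighborFinset_eq_degree]
  exact hm _ (by simpa using hG.cliqueFreeOn_neighborSet v)

theorem CliqueFree.four_mul_card_edgeFinset_le [Fintype V] [DecidableRel G.Adj]
    (hG : G.CliqueFree 3) :
    4 * #G.edgeFinset ≤ Fintype.card V ^ 2 := by
  have h := CliqueFree.card_edgeFinset_le (r := 2) hG
  have hchoose : (Fintype.card V % 2).choose 2 = 0 :=
    Nat.choose_eq_zero_of_lt (Nat.mod_lt _ two_pos)
  simp only [hchoose, add_zero, Nat.add_one_sub_one, mul_one] at h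
  have := Nat.div_mul_le_self (Fintype.card V ^ 2 - (Fintype.card V % 2) ^ 2) (2 * 2)
  omega

theorem card_edgeFinset_le_card_edgeFinset_induce_add_sum_degree [Fintype V] [DecidableEq V]
    [DecidableRel G.Adj] (Z : Finset V) :
    #G.edgeFinset ≤ #(G.induce (Z : Set V)).edgeFinset + ∑ v ∈ Zᶜ, G.degree v := by
  have hcover :
      G.edgeFinset ⊆ (G.edgeFinset ∩ Z.sym2) ∪ Zᶜ.biUnion fun v => G.incidenceFinset v := by
    rintro ⟨a, b⟩ hab
    rw [mem_edgeFinset, mem_edgeSet] at hab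
    by_cases ha : a ∈ Z
    · by_cases hb : b ∈ Z
      · simp [hab, ha, hb]
      · exact mem_union_right _
          (mem_biUnion.2 ⟨b, by simpa using hb, by simp [incidenceSet, hab]⟩)
    · exact mem_union_right _
        (mem_biUnion.2 ⟨a, by simpa using ha, by simp [incidenceSet, hab]⟩)
  have hinside : #(G.edgeFinset ∩ Z.sym2) = #(G.induce (Z : Set V)).edgeFinset := by
    rw [← card_map (Function.Embedding.subtype (· ∈ (Z : Set V))).sym2Map]
    convert congrArg card (map_edgeFinset_induce (G := G) (s := (Z : Set V))).symm using 3 <;>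
      simp
  calc #G.edgeFinset
      ≤ #(G.edgeFinset ∩ Z.sym2) + #(Zᶜ.biUnion (fun v => G.incidenceFinset v)) :=
        (card_le_card hcover).trans (card_union_le _ _)
    _ ≤ #(G.induce (Z : Set V)).edgeFinset + ∑ v ∈ Zᶜ, G.degree v := by
        rw [hinside]
        gcongr
        refine card_biUnion_le.trans_eq (sum_congr rfl fun v _ => ?_)
        exact card_incidenceFinset_eq_degree G v

theorem CliqueFree.card_edgeFinset_le_of_forall_cliqueFreeOn_card_le [Fintype V] [DecidableEq V]
    [DecidableRel G.Adj] (hG : G.CliqueFree 4) {Z : Finset V} (hZ : G.CliqueFreeOn Z 3)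
    (hZmax : ∀ s : Finset V, G.CliqueFreeOn s 3 → #s ≤ #Z) :
    (#G.edgeFinset : ℝ) ≤ #Z * (Fintype.card V - 3 / 4 * #Z) := by
  have hinside : 4 * #(G.induce (Z : Set V)).edgeFinset ≤ #Z ^ 2 := by
    simpa using CliqueFree.four_mul_card_edgeFinset_le ((cliqueFree_induce_iff G _ 3).2 hZ)
  have houtside : ∑ v ∈ Zᶜ, G.degree v ≤ #Zᶜ * #Z :=
    sum_le_card_nsmul _ _ _ fun v _ => hG.degree_le_of_forall_cliqueFreeOn_card_le hZmax v
  have hsplit := card_edgeFinset_le_card_edgeFinset_induce_add_sum_degree (G := G) Z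
  have hcompl : (#Zᶜ : ℝ) = Fintype.card V - #Z := by
    rw [card_compl, Nat.cast_sub (card_le_univ Z)]
  have hcount : 4 * #G.edgeFinset ≤ #Z ^ 2 + 4 * (#Zᶜ * #Z) := by linarith
  have hcount' : (4 * #G.edgeFinset : ℝ) ≤ #Z ^ 2 + 4 * (#Zᶜ * #Z) := by exact_mod_cast hcount
  rw [hcompl] at hcount'
  linarith

end SimpleGraph

theorem antitoneOn_mul_sub_three_quarters_mul (n : ℝ) :
    AntitoneOn (fun x : ℝ => x * (n - 3 / 4 * x)) (Set.Ici (2 / 3 * n)) := by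
  intro x hx y _ hxy
  simp only [Set.mem_Ici] at hx
  nlinarith

open scoped Classical

theorem stmt_4 {V : Type*} [Fintype V] (G : SimpleGraph V)
    (hG : G.CliqueFree 4) (Z0 : Finset V)
    (hZtf : (G.induce (Z0 : Set V)).CliqueFree 3)
    (hZbig : (Z0.card : ℝ) ≥ 2 / 3 * Fintype.card V) :
    (G.edgeFinset.card : ℝ) ≤ Z0.card * (Fintype.card V - (3 / 4 : ℝ) * Z0.card) := by
  have hZ0 : G.CliqueFreeOn Z0 3 := (G.cliqueFree_induce_iff _ 3).1 hZtf
  obtain ⟨Z, hZmem, hZmax⟩ := exists_max_image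
    (univ.filter fun s : Finset V => G.CliqueFreeOn s 3) card ⟨Z0, by simpa using hZ0⟩
  have hZ : G.CliqueFreeOn Z 3 := (mem_filter.1 hZmem).2
  have hZ0Z : (Z0.card : ℝ) ≤ Z.card := by exact_mod_cast hZmax Z0 (by simpa using hZ0)
  calc (G.edgeFinset.card : ℝ)
      ≤ Z.card * (Fintype.card V - 3 / 4 * Z.card) :=
        hG.card_edgeFinset_le_of_forall_cliqueFreeOn_card_le hZ
          fun s hs => hZmax s (by simpa using hs)
    _ ≤ Z0.card * (Fintype.card V - (3 / 4 : ℝ) * Z0.card) :=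
        antitoneOn_mul_sub_three_quarters_mul _ hZbig (hZbig.trans hZ0Z) hZ0Z
end

section
/- Let G be a triangle-free simple graph on n vertices and I0 an independent set of G with |I0| ≥ n/2. Then e(G) ≤ |I0|·(n − |I0|). -/
open scoped Classical

theorem stmt_5 {V : Type*} [Fintype V] (G : SimpleGraph V)
    (hG : G.CliqueFree 3) (I0 : Finset V)
    (hI0 : ∀ v ∈ I0, ∀ w ∈ I0, ¬G.Adj v w)
    (hbig : (I0.card : ℝ) ≥ Fintype.card V / 2) :
    (G.edgeFinset.card : ℝ) ≤ I0.card * (Fintype.card V - I0.card) := by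
  classical
  set n := Fintype.card V with hn
  have hne : ((Finset.univ : Finset (Finset V)).filter
      (fun s => ∀ v ∈ s, ∀ w ∈ s, ¬ G.Adj v w)).Nonempty :=
    ⟨∅, by simp⟩
  obtain ⟨I, hImem, hImax⟩ := Finset.exists_max_image _ Finset.card hne
  simp only [Finset.mem_filter, Finset.mem_univ, true_and] at hImem
  have hImax' : ∀ J : Finset V, (∀ v ∈ J, ∀ w ∈ J, ¬ G.Adj v w) → J.card ≤ I.card := by
    intro J hJ
    exact hImax J (Finset.mem_filter.2 ⟨Finset.mem_univ _, hJ⟩)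
  have hIcard : I0.card ≤ I.card := hImax' I0 hI0
  have hIn : I.card ≤ n := Finset.card_le_univ I
  have hdeg : ∀ v, G.degree v ≤ I.card := by
    intro v
    refine hImax' (G.neighborFinset v) ?_
    intro a ha b hb hab
    rw [SimpleGraph.mem_neighborFinset] at ha hb
    exact hG {v, a, b} (SimpleGraph.is3Clique_triple_iff.2 ⟨ha, hb, hab⟩)
  have hdegI : ∀ v ∈ I, G.degree v ≤ n - I.card := by
    intro v hv
    have hsub : G.neighborFinset v ⊆ Iᶜ := by
      intro w hw
      rw [SimpleGraph.mem_neighborFinset] at hw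
      rw [Finset.mem_compl]
      intro hwI
      exact hImem v hv w hwI hw
    calc G.degree v = (G.neighborFinset v).card := (G.card_neighborFinset_eq_degree v).symm
      _ ≤ Iᶜ.card := Finset.card_le_card hsub
      _ = n - I.card := by rw [Finset.card_compl]
  have h2e : 2 * G.edgeFinset.card ≤ 2 * (I.card * (n - I.card)) := by
    rw [← SimpleGraph.sum_degrees_eq_twice_card_edges,
      ← Finset.sum_add_sum_compl I (fun v => G.degree v)]
    have h1 : ∑ v ∈ I, G.degree v ≤ I.card * (n - I.card) := by
      calc ∑ v ∈ I, G.degree v ≤ I.card • (n - I.card) :=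
            Finset.sum_le_card_nsmul _ _ _ (fun v hv => hdegI v hv)
        _ = I.card * (n - I.card) := smul_eq_mul ..
    have h2 : ∑ v ∈ Iᶜ, G.degree v ≤ I.card * (n - I.card) := by
      calc ∑ v ∈ Iᶜ, G.degree v ≤ Iᶜ.card • I.card :=
            Finset.sum_le_card_nsmul _ _ _ (fun v _ => hdeg v)
        _ = I.card * (n - I.card) := by rw [smul_eq_mul, Finset.card_compl, Nat.mul_comm]
    omega
  have h2e' : (2 : ℝ) * G.edgeFinset.card ≤ 2 * (I.card * (n - I.card)) := by
    have := (Nat.cast_le (α := ℝ)).2 h2e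
    push_cast [Nat.cast_sub hIn] at this
    linarith
  nlinarith [h2e', (Nat.cast_le (α := ℝ)).2 hIcard, (Nat.cast_le (α := ℝ)).2 hIn, hbig]
end

section
/- Let G be a K4-free simple graph on n vertices, I an independent set of G, and Z a largest triangle-free induced subgraph of G − I. Then e(G) ≤ |Z|·(n + |I|)/2. -/
open scoped Classical

open Finset

lemma cliqueFreeOn_induce {V : Type*} {G : SimpleGraph V} {s : Set V} {n : ℕ}
    (h : G.CliqueFreeOn s n) : (G.induce s).CliqueFree n := by
  intro t ht
  refine h (t := t.map (Function.Embedding.subtype _)) ?_ ?_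
  · intro x hx
    simp only [Finset.coe_map, Set.mem_image, Finset.mem_coe, Finset.mem_map] at hx ⊢
    obtain ⟨a, _, rfl⟩ := hx
    exact a.2
  · constructor
    · rintro x hx y hy hxy
      simp only [Finset.coe_map, Set.mem_image, Finset.mem_coe, Finset.mem_map] at hx hy
      obtain ⟨a, ha, rfl⟩ := hx
      obtain ⟨b, hb, rfl⟩ := hy
      have hab : a ≠ b := fun h => hxy (by rw [h])
      exact ht.1 ha hb hab
    · rw [Finset.card_map]; exact ht.2

theorem stmt_6 {V : Type*} [Fintype V] (G : SimpleGraph V)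
    (hG : G.CliqueFree 4) (I Z : Finset V)
    (hI : ∀ v ∈ I, ∀ w ∈ I, ¬G.Adj v w)
    (hZI : Disjoint Z I)
    (hZtf : (G.induce (Z : Set V)).CliqueFree 3)
    (hZmax : ∀ Z' : Finset V, Disjoint Z' I → (G.induce (Z' : Set V)).CliqueFree 3 →
      Z'.card ≤ Z.card) :
    (G.edgeFinset.card : ℝ) ≤ Z.card * (Fintype.card V + I.card) / 2 := by
  classical
  -- neighborhoods are triangle-free
  have h4 : G.CliqueFreeOn (Set.univ : Set V) 4 := by
    rw [SimpleGraph.cliqueFreeOn_univ]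
    exact hG
  have hN : ∀ v : V, G.CliqueFreeOn (G.neighborSet v) 3 := by
    intro v
    have h3 : G.CliqueFreeOn (Set.univ ∩ G.neighborSet v) 3 :=
      SimpleGraph.CliqueFreeOn.of_succ G h4 (Set.mem_univ v)
    simpa using h3
  -- key: for every v, |N(v) \ I| ≤ |Z|
  have key : ∀ v : V, (G.neighborFinset v \ I).card ≤ Z.card := by
    intro v
    have hsub : (↑(G.neighborFinset v \ I) : Set V) ⊆ G.neighborSet v := by
      intro x hx
      simp only [Finset.coe_sdiff, Set.mem_diff, Finset.mem_coe,
        SimpleGraph.mem_neighborFinset, SimpleGraph.mem_neighborSet] at hx ⊢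
      exact hx.1
    have hfree : G.CliqueFreeOn (↑(G.neighborFinset v \ I) : Set V) 3 :=
      SimpleGraph.CliqueFreeOn.subset G hsub (hN v)
    exact hZmax _ sdiff_disjoint (cliqueFreeOn_induce hfree)
  -- for u ∈ I, degree u ≤ |Z|
  have keyI : ∀ u ∈ I, G.degree u ≤ Z.card := by
    intro u hu
    have : G.neighborFinset u \ I = G.neighborFinset u := by
      apply Finset.sdiff_eq_self_of_disjoint
      rw [Finset.disjoint_right]
      intro w hw hw'
      exact hI u hu w hw (by rwa [SimpleGraph.mem_neighborFinset] at hw')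
    rw [← SimpleGraph.card_neighborFinset_eq_degree, ← this]
    exact key u
  -- double counting
  have hswap : ∑ v : V, (G.neighborFinset v ∩ I).card = ∑ u ∈ I, G.degree u := by
    have h1 : ∀ v : V, (G.neighborFinset v ∩ I).card = ∑ u ∈ I, if G.Adj v u then 1 else 0 := by
      intro v
      rw [← Finset.card_filter]
      congr 1
      ext u
      simp [and_comm]
    have h2 : ∀ u : V, (∑ v : V, if G.Adj v u then 1 else 0) = G.degree u := by
      intro u
      rw [← Finset.card_filter, ← SimpleGraph.card_neighborFinset_eq_degree]
      congr 1
      ext v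
      simp [SimpleGraph.adj_comm]
    simp_rw [h1]
    rw [Finset.sum_comm]
    simp_rw [h2]
  have hnat : 2 * G.edgeFinset.card ≤ Z.card * (Fintype.card V + I.card) := by
    rw [← SimpleGraph.sum_degrees_eq_twice_card_edges]
    have hdeg : ∀ v : V, G.degree v =
        (G.neighborFinset v \ I).card + (G.neighborFinset v ∩ I).card := by
      intro v
      rw [Finset.card_sdiff_add_card_inter, SimpleGraph.card_neighborFinset_eq_degree]
    calc ∑ v : V, G.degree v
        = ∑ v : V, ((G.neighborFinset v \ I).card + (G.neighborFinset v ∩ I).card) := by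
          simp_rw [← hdeg]
      _ = (∑ v : V, (G.neighborFinset v \ I).card) + ∑ v : V, (G.neighborFinset v ∩ I).card := by
          rw [Finset.sum_add_distrib]
      _ ≤ (∑ _v : V, Z.card) + ∑ u ∈ I, Z.card := by
          rw [hswap]
          exact Nat.add_le_add (Finset.sum_le_sum fun v _ => key v)
            (Finset.sum_le_sum fun u hu => keyI u hu)
      _ = Z.card * (Fintype.card V + I.card) := by
          simp [Finset.sum_const, Finset.card_univ, Nat.mul_add, Nat.mul_comm]
  rw [le_div_iff₀ (by norm_num : (0:ℝ) < 2)]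
  calc (G.edgeFinset.card : ℝ) * 2 = ((2 * G.edgeFinset.card : ℕ) : ℝ) := by push_cast; ring
    _ ≤ ((Z.card * (Fintype.card V + I.card) : ℕ) : ℝ) := by exact_mod_cast hnat
    _ = Z.card * (Fintype.card V + I.card) := by push_cast; ring
end

section
/- Let G be a K4-free graph with n vertices and m edges where m ≥ n²/4. Then G contains an independent set of size at least 4m/n − n; i.e., α(G) ≥ 4m/n − n. -/
open scoped Classical

theorem stmt_10 {V : Type*} [Fintype V] (G : SimpleGraph V)
    (hG : G.CliqueFree 4)
    (hm : (G.edgeFinset.card : ℝ) ≥ (Fintype.card V : ℝ) ^ 2 / 4) :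
    ∃ I : Finset V, (∀ v ∈ I, ∀ w ∈ I, ¬G.Adj v w) ∧
      (I.card : ℝ) ≥ 4 * G.edgeFinset.card / Fintype.card V - Fintype.card V := by
  classical
  set n := Fintype.card V with hn
  set m := G.edgeFinset.card with hmdef
  by_cases hn0 : n = 0
  · refine ⟨∅, by simp, ?_⟩
    have hV : IsEmpty V := Fintype.card_eq_zero_iff.mp hn0
    have hm0 : m = 0 := by
      simp [hmdef, Finset.card_eq_zero, Finset.eq_empty_iff_forall_notMem]
    simp [hn0, hm0]
  have hn1 : (1:ℝ) ≤ n := by exact_mod_cast Nat.one_le_iff_ne_zero.mpr hn0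
  have hnpos : (0:ℝ) < n := by linarith
  have hmpos : 0 < m := by
    rcases Nat.eq_zero_or_pos m with h | h
    · rw [h] at hm; push_cast at hm; nlinarith
    · exact h
  -- find a vertex of positive degree
  have hsumdeg : ∑ v, G.degree v = 2 * m := G.sum_degrees_eq_twice_card_edges
  have hex : ∃ v, 0 < G.degree v := by
    by_contra h
    push_neg at h
    have : ∑ v, G.degree v = 0 := Finset.sum_eq_zero fun v _ => Nat.le_zero.mp (h v)
    omega
  obtain ⟨v0, hv0⟩ := hex
  obtain ⟨w0, hw0⟩ := Finset.card_pos.mp hv0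
  -- the finset of ordered adjacent pairs
  set P : Finset (V × V) := Finset.univ.filter (fun p : V × V => G.Adj p.1 p.2) with hP
  have hPne : P.Nonempty := by
    refine ⟨(v0, w0), ?_⟩
    simp only [hP, Finset.mem_filter, Finset.mem_univ, true_and]
    exact (SimpleGraph.mem_neighborFinset _ _ _).mp hw0
  obtain ⟨p, hpP, hpmax⟩ := Finset.exists_max_image P (fun p => G.degree p.1 + G.degree p.2) hPne
  obtain ⟨a, b⟩ := p
  have hab : G.Adj a b := by
    simpa [hP] using hpP
  set M := G.degree a + G.degree b with hM
  -- double counting: S := ∑ v ∑ w∈N(v) (d v + d w)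
  have hswap : ∀ f : V → ℕ,
      ∑ v, ∑ w ∈ G.neighborFinset v, f w = ∑ w, G.degree w * f w := by
    intro f
    simp only [SimpleGraph.neighborFinset_eq_filter, Finset.sum_filter]
    rw [Finset.sum_comm]
    refine Finset.sum_congr rfl fun w _ => ?_
    have hfil : Finset.univ.filter (fun v => G.Adj v w) = G.neighborFinset w := by
      ext u
      simp [SimpleGraph.mem_neighborFinset, SimpleGraph.adj_comm]
    calc ∑ v, (if G.Adj v w then f w else 0)
        = ∑ v ∈ Finset.univ.filter (fun v => G.Adj v w), f w :=
          (Finset.sum_filter _ _).symm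
      _ = (Finset.univ.filter (fun v => G.Adj v w)).card * f w := by
          rw [Finset.sum_const, smul_eq_mul]
      _ = G.degree w * f w := by rw [hfil, SimpleGraph.card_neighborFinset_eq_degree]
  have hSeq : ∑ v, ∑ w ∈ G.neighborFinset v, (G.degree v + G.degree w)
      = 2 * ∑ v, G.degree v * G.degree v := by
    have h1 : ∑ v, ∑ w ∈ G.neighborFinset v, G.degree v = ∑ v, G.degree v * G.degree v := by
      refine Finset.sum_congr rfl fun v _ => ?_
      rw [Finset.sum_const, smul_eq_mul, SimpleGraph.card_neighborFinset_eq_degree]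
    calc ∑ v, ∑ w ∈ G.neighborFinset v, (G.degree v + G.degree w)
        = (∑ v, ∑ w ∈ G.neighborFinset v, G.degree v)
          + ∑ v, ∑ w ∈ G.neighborFinset v, G.degree w := by
          rw [← Finset.sum_add_distrib]
          exact Finset.sum_congr rfl fun v _ => Finset.sum_add_distrib
      _ = 2 * ∑ v, G.degree v * G.degree v := by
          rw [h1, hswap (fun w => G.degree w)]; ring
  have hSle : ∑ v, ∑ w ∈ G.neighborFinset v, (G.degree v + G.degree w) ≤ 2 * m * M := by
    calc ∑ v, ∑ w ∈ G.neighborFinset v, (G.degree v + G.degree w)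
        ≤ ∑ v, ∑ w ∈ G.neighborFinset v, M := by
          refine Finset.sum_le_sum fun v _ => Finset.sum_le_sum fun w hw => ?_
          refine hpmax (v, w) ?_
          simp only [hP, Finset.mem_filter, Finset.mem_univ, true_and]
          exact (SimpleGraph.mem_neighborFinset _ _ _).mp hw
      _ = ∑ v, G.degree v * M := by
          refine Finset.sum_congr rfl fun v _ => ?_
          rw [Finset.sum_const, smul_eq_mul, SimpleGraph.card_neighborFinset_eq_degree]
      _ = (∑ v, G.degree v) * M := by rw [Finset.sum_mul]
      _ = 2 * m * M := by rw [hsumdeg]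
  -- Cauchy-Schwarz in ℝ
  have hCS : ((2 * m : ℕ) : ℝ) ^ 2 ≤ (n : ℝ) * ∑ v, (G.degree v : ℝ) ^ 2 := by
    have := sq_sum_le_card_mul_sum_sq (s := (Finset.univ : Finset V))
      (f := fun v => (G.degree v : ℝ))
    rw [Finset.card_univ] at this
    calc ((2 * m : ℕ) : ℝ) ^ 2 = (∑ v, (G.degree v : ℝ)) ^ 2 := by
          rw [← hsumdeg]; push_cast; ring
      _ ≤ (n : ℝ) * ∑ v, (G.degree v : ℝ) ^ 2 := this
  have hsum_sq : (∑ v, G.degree v * G.degree v : ℕ) = ∑ v, G.degree v ^ 2 := by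
    exact Finset.sum_congr rfl fun v _ => (sq (G.degree v)).symm
  -- key inequality: 4m/n ≤ M
  have hkey : 4 * (m : ℝ) / n ≤ (M : ℝ) := by
    rw [div_le_iff₀ hnpos]
    have hB : (2 * ∑ v, G.degree v ^ 2 : ℕ) ≤ 2 * m * M := by
      rw [← hsum_sq, ← hSeq]; exact hSle
    have hBR : 2 * (∑ v, (G.degree v : ℝ) ^ 2) ≤ 2 * m * M := by
      exact_mod_cast hB
    have hmR : (0:ℝ) < m := by exact_mod_cast hmpos
    have hCS' : (2 * (m:ℝ)) ^ 2 ≤ (n : ℝ) * ∑ v, (G.degree v : ℝ) ^ 2 := by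
      push_cast at hCS ⊢; linarith
    nlinarith [hCS', hBR, hmR, hnpos]
  -- the independent set
  refine ⟨G.neighborFinset a ∩ G.neighborFinset b, ?_, ?_⟩
  · intro x hx y hy hxy
    simp only [Finset.mem_inter, SimpleGraph.mem_neighborFinset] at hx hy
    have nab : a ≠ b := hab.ne
    have nax : a ≠ x := hx.1.ne
    have nay : a ≠ y := hy.1.ne
    have nbx : b ≠ x := hx.2.ne
    have nby : b ≠ y := hy.2.ne
    have nxy : x ≠ y := hxy.ne
    refine hG {a, b, x, y} ⟨?_, ?_⟩
    · intro u hu v hv huv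
      simp only [Finset.coe_insert, Set.mem_insert_iff, Finset.coe_singleton,
        Set.mem_singleton_iff] at hu hv
      rcases hu with rfl | rfl | rfl | rfl <;> rcases hv with rfl | rfl | rfl | rfl <;>
        first
          | exact absurd rfl huv
          | exact hab | exact hab.symm
          | exact hx.1 | exact hx.1.symm
          | exact hy.1 | exact hy.1.symm
          | exact hx.2 | exact hx.2.symm
          | exact hy.2 | exact hy.2.symm
          | exact hxy | exact hxy.symm
    · rw [Finset.card_insert_of_notMem (by simp [nab, nax, nay]),
        Finset.card_insert_of_notMem (by simp [nbx, nby]),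
        Finset.card_insert_of_notMem (by simp [nxy]), Finset.card_singleton]
  · have hcard : G.degree a + G.degree b
        ≤ (G.neighborFinset a ∩ G.neighborFinset b).card + n := by
      have h1 := Finset.card_union_add_card_inter (G.neighborFinset a) (G.neighborFinset b)
      have h2 : (G.neighborFinset a ∪ G.neighborFinset b).card ≤ n := by
        simpa [hn] using Finset.card_le_univ (G.neighborFinset a ∪ G.neighborFinset b)
      have h3 : (G.neighborFinset a).card = G.degree a := rfl
      have h4 : (G.neighborFinset b).card = G.degree b := rfl
      omega
    have hcardR : (G.degree a + G.degree b : ℝ)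
        ≤ ((G.neighborFinset a ∩ G.neighborFinset b).card : ℝ) + n := by
      exact_mod_cast hcard
    have hMcast : (M : ℝ) = (G.degree a : ℝ) + G.degree b := by push_cast [hM]; ring
    rw [ge_iff_le, sub_le_iff_le_add]
    rw [hMcast] at hkey
    linarith
end

section
/- Let H = I7 ∨ C5 be the join of a 7-vertex independent set and a 5-cycle (so |H| = 12). Then for every balanced partition V(H) = A ∪ A^c with |A| = |A^c| = 6, we have max{e(A), e(A^c)} ≥ 10, and there is a balanced partition achieving max{e(A), e(A^c)} = 10. Hence D^b_{2,∞}(H) = 10 = (5/72)|H|². -/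
/-!
H is the join of the empty graph on 7 vertices with the 5-cycle C. If a balanced set A meets C
in S, then e(A) = e_C(S) + (6 - |S|)|S| and e(Aᶜ) = e_C(Sᶜ) + (|S| + 1)(5 - |S|). Going through
|S| = 0, …, 5, the larger of the two is at least 10, using that any three vertices of C span an
edge; taking S = ∅ gives e(A) = 0 and e(Aᶜ) = 5 + 5.
-/

open scoped Classical

/-- The number of edges of `G` with both endpoints in `A`. -/
noncomputable def edgesIn {V : Type*} [Fintype V] (G : SimpleGraph V) (A : Finset V) : ℕ :=
  (G.edgeFinset.filter fun e => ∀ v ∈ e, v ∈ A).card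

/-- The join `I₇ ∨ C₅` of a 7-vertex independent set and a 5-cycle. -/
def HI7C5 : SimpleGraph (Fin 7 ⊕ Fin 5) :=
  SimpleGraph.fromRel (fun x y =>
    (x.isLeft = true ∧ y.isRight = true) ∨
    (∃ i j : Fin 5, x = Sum.inr i ∧ y = Sum.inr j ∧ (j : ZMod 5) = (i : ZMod 5) + 1))

open Finset

namespace Finset

variable {α β : Type*} [Fintype α] [Fintype β] [DecidableEq α] [DecidableEq β]

theorem toLeft_compl (u : Finset (α ⊕ β)) : uᶜ.toLeft = u.toLeftᶜ := by
  ext; simp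

theorem toRight_compl (u : Finset (α ⊕ β)) : uᶜ.toRight = u.toRightᶜ := by
  ext; simp

end Finset

namespace SimpleGraph

variable {V α β : Type*}

def join (G : SimpleGraph α) (H : SimpleGraph β) : SimpleGraph (α ⊕ β) :=
  (G ⊕g H) ⊔ completeBipartiteGraph α β

section join

variable {G : SimpleGraph α} {H : SimpleGraph β}

@[simp] theorem join_adj_inl_inl {a a' : α} : (G.join H).Adj (.inl a) (.inl a') ↔ G.Adj a a' := by
  simp [join]

@[simp] theorem join_adj_inr_inr {b b' : β} : (G.join H).Adj (.inr b) (.inr b') ↔ H.Adj b b' := by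
  simp [join]

@[simp] theorem join_adj_inl_inr {a : α} {b : β} : (G.join H).Adj (.inl a) (.inr b) := by
  simp [join]

@[simp] theorem join_adj_inr_inl {a : α} {b : β} : (G.join H).Adj (.inr b) (.inl a) := by
  simp [join]

end join

section edgesIn

variable [Fintype V]

theorem two_mul_edgesIn (G : SimpleGraph V) [DecidableRel G.Adj] (A : Finset V) :
    2 * edgesIn G A = #(G.interedges A A) := by
  unfold edgesIn
  set E := G.edgeFinset.filter fun e => ∀ v ∈ e, v ∈ A
  have hmaps : ∀ p ∈ G.interedges A A, s(p.1, p.2) ∈ E := by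
    rintro ⟨v, w⟩ h
    rw [mk_mem_interedges_iff] at h
    simp [E, h.1, h.2.1, h.2.2]
  have hfiber : ∀ e ∈ E, #{p ∈ G.interedges A A | s(p.1, p.2) = e} = 2 := by
    intro e he
    induction e using Sym2.ind with | _ v w => ?_
    simp only [E, mem_filter, mem_edgeFinset, mem_edgeSet, Sym2.mem_iff] at he
    obtain ⟨hvw, hA⟩ := he
    have hpair : {p ∈ G.interedges A A | s(p.1, p.2) = s(v, w)} = {(v, w), (w, v)} := by
      ext ⟨x, y⟩
      simp only [mem_filter, mk_mem_interedges_iff, Sym2.eq_iff, mem_insert, mem_singleton,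
        Prod.mk.injEq]
      constructor
      · rintro ⟨-, h⟩; exact h
      · rintro (⟨rfl, rfl⟩ | ⟨rfl, rfl⟩)
        · exact ⟨⟨hA _ (.inl rfl), hA _ (.inr rfl), hvw⟩, .inl ⟨rfl, rfl⟩⟩
        · exact ⟨⟨hA _ (.inr rfl), hA _ (.inl rfl), hvw.symm⟩, .inr ⟨rfl, rfl⟩⟩
    rw [hpair, card_pair (by simp [hvw.ne])]
  rw [card_eq_sum_card_fiberwise hmaps, sum_congr rfl hfiber, sum_const, smul_eq_mul, mul_comm]
  -- `edgesIn` counts in the classical `Fintype` instance on the edge set, `E` in the local one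
  congr!

theorem two_mul_edgesIn_eq_sum (G : SimpleGraph V) [DecidableRel G.Adj] (A : Finset V) :
    2 * edgesIn G A = ∑ v ∈ A, ∑ w ∈ A, if G.Adj v w then 1 else 0 := by
  rw [two_mul_edgesIn, interedges_def, card_filter, sum_product]

theorem edgesIn_eq_card_interedges_div_two (G : SimpleGraph V) [DecidableRel G.Adj]
    (A : Finset V) : edgesIn G A = #(G.interedges A A) / 2 := by
  have := two_mul_edgesIn G A
  omega

theorem edgesIn_bot (A : Finset V) : edgesIn (⊥ : SimpleGraph V) A = 0 := by
  simp [edgesIn]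

end edgesIn

theorem edgesIn_join [Fintype α] [Fintype β] (G : SimpleGraph α) (H : SimpleGraph β)
    (u : Finset (α ⊕ β)) :
    edgesIn (G.join H) u = edgesIn G u.toLeft + edgesIn H u.toRight + #u.toLeft * #u.toRight := by
  have hG := two_mul_edgesIn_eq_sum G u.toLeft
  have hH := two_mul_edgesIn_eq_sum H u.toRight
  have hK := two_mul_edgesIn_eq_sum (G.join H) u
  rw [← toLeft_disjSum_toRight (u := u)] at hK
  simp only [sum_disjSum, join_adj_inl_inl, join_adj_inr_inr, join_adj_inl_inr,
    join_adj_inr_inl, if_true, sum_const, smul_eq_mul, mul_one, sum_add_distrib] at hK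
  rw [← hG, ← hH] at hK
  rw [← toLeft_disjSum_toRight (u := u), toLeft_disjSum, toRight_disjSum]
  linarith

end SimpleGraph

open SimpleGraph

theorem HI7C5_eq_join : HI7C5 = (⊥ : SimpleGraph (Fin 7)).join (cycleGraph 5) := by
  have hcycle : ∀ i j : Fin 5, (i ≠ j ∧ ((j : ZMod 5) = i + 1 ∨ (i : ZMod 5) = j + 1)) ↔
      (cycleGraph 5).Adj i j := by
    decide
  ext (a | i) (b | j) <;> simp [HI7C5, ← hcycle]

-- The two sides are `e(A)` and `e(Aᶜ)` for a balanced `A` of `I₇ ∨ C₅` with `A ∩ C₅ = S`.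
theorem ten_le_max_edgesIn_cycleGraph_five (S : Finset (Fin 5)) :
    10 ≤ max (edgesIn (cycleGraph 5) S + (6 - #S) * #S)
      (edgesIn (cycleGraph 5) Sᶜ + (#S + 1) * #Sᶜ) := by
  rw [edgesIn_eq_card_interedges_div_two, edgesIn_eq_card_interedges_div_two]
  revert S
  decide

theorem stmt_11 :
    (∀ A : Finset (Fin 7 ⊕ Fin 5), A.card = 6 →
        max (edgesIn HI7C5 A) (edgesIn HI7C5 Aᶜ) ≥ 10) ∧
      (∃ A : Finset (Fin 7 ⊕ Fin 5), A.card = 6 ∧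
        max (edgesIn HI7C5 A) (edgesIn HI7C5 Aᶜ) = 10) := by
  simp only [HI7C5_eq_join, edgesIn_join, edgesIn_bot, zero_add, toLeft_compl, toRight_compl]
  refine ⟨fun A hA => ?_, ⟨({6}ᶜ : Finset (Fin 7)).disjSum ∅, by decide, ?_⟩⟩
  · have hS : #A.toRight ≤ 5 := card_le_univ _
    have hL : #A.toLeft = 6 - #A.toRight := by
      rw [← hA, ← card_toLeft_add_card_toRight]; omega
    have hLc : #A.toLeftᶜ = #A.toRight + 1 := by
      rw [card_compl, hL, Fintype.card_fin]; omega
    rw [hL, hLc]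
    exact ten_le_max_edgesIn_cycleGraph_five A.toRight
  · simp only [toLeft_disjSum, toRight_disjSum, compl_compl, card_empty]
    rw [edgesIn_eq_card_interedges_div_two, edgesIn_eq_card_interedges_div_two]
    decide
end

section
/- Let H = I7 ∨ C5 and let H^{2n} be its 2n-blow-up (a K4-free graph on 24n vertices). Then D^b_{2,∞}(H^{2n}) = 37n² = (37/576)·|H^{2n}|², which is strictly greater than |H^{2n}|²/16. -/
open scoped Classical

/-- The `m`-blow-up of a graph `G`: each vertex is replaced by `m` copies, with copies of
`u` and `v` adjacent iff `u` and `v` are adjacent in `G`. -/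
def blowup {V : Type*} (G : SimpleGraph V) (m : ℕ) : SimpleGraph (V × Fin m) where
  Adj x y := G.Adj x.1 y.1
  symm := ⟨by intro x y h; exact h.symm⟩
  loopless := ⟨by intro x h; exact G.loopless.irrefl _ h⟩

/-!
Write `a u` for the number of copies of the vertex `u` of `I₇ ∨ C₅` lying in `A`,
`s = ∑ a (inl i)` and `T = ∑ a (inr j)`. Then `e(A) = s T + ∑ⱼ a (inr j) a (inr (j + 1))`.
In a balanced bipartition one of the two sides has `T ≥ 5n`, hence `s = 12n - T`. For fibre
sizes in `[0, 2n]` the cyclic sum is at least `2nT - 8n²`, because `∑ xⱼ xⱼ₊₁ ≥ -3n²` when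
`|xⱼ| ≤ n` (the cycle is odd), and at least `4nT - 20n²`, because `∑ (2n - aⱼ)(2n - aⱼ₊₁) ≥ 0`.
Either bound gives `e(A) ≥ 37n²` on part of the range `5n ≤ T ≤ 10n`, and together they cover
all of it. Equality holds when each side takes `7n` copies of vertices of `I₇` and has fibre
sizes `(2n, 0, 2n, 0, n)` on `C₅`, up to a symmetry of the cycle.
-/

open Finset

section CycleSums

variable {R : Type*} [CommRing R] [LinearOrder R] [IsStrictOrderedRing R]

lemma neg_sq_le_mul_add_mul_add_mul {n a b c : R} (ha : |a| ≤ n) (hb : |b| ≤ n)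
    (hc : |c| ≤ n) : -n ^ 2 ≤ a * b + b * c + c * a := by
  -- for `0 ≤ x, y` we have `n² + xy + yz + zx = (n - x)(n - y) + (n + z)(x + y)`; two of `a, b, c`
  -- have the same sign, and the expression is invariant under `(a, b, c) ↦ (-a, -b, -c)`
  have of_nonneg : ∀ x y z : R, |x| ≤ n → |y| ≤ n → |z| ≤ n → 0 ≤ x → 0 ≤ y →
      -n ^ 2 ≤ x * y + y * z + z * x := fun x y z hx hy hz hx₀ hy₀ => by
    rw [abs_le] at hx hy hz
    linarith [mul_nonneg (sub_nonneg.2 hx.2) (sub_nonneg.2 hy.2),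
      mul_nonneg (neg_le_iff_add_nonneg.1 hz.1) (add_nonneg hx₀ hy₀)]
  have ha' : |-a| ≤ n := by rwa [abs_neg]
  have hb' : |-b| ≤ n := by rwa [abs_neg]
  have hc' : |-c| ≤ n := by rwa [abs_neg]
  rcases le_total 0 a with h₁ | h₁ <;> rcases le_total 0 b with h₂ | h₂ <;>
    rcases le_total 0 c with h₃ | h₃
  all_goals first
    | linarith [of_nonneg a b c ha hb hc h₁ h₂]
    | linarith [of_nonneg b c a hb hc ha h₂ h₃]
    | linarith [of_nonneg c a b hc ha hb h₃ h₁]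
    | linarith [of_nonneg (-a) (-b) (-c) ha' hb' hc' (neg_nonneg.2 h₁) (neg_nonneg.2 h₂)]
    | linarith [of_nonneg (-b) (-c) (-a) hb' hc' ha' (neg_nonneg.2 h₂) (neg_nonneg.2 h₃)]
    | linarith [of_nonneg (-c) (-a) (-b) hc' ha' hb' (neg_nonneg.2 h₃) (neg_nonneg.2 h₁)]

lemma neg_three_mul_sq_le_sum_mul_succ {n : R} {x : Fin 5 → R} (hx : ∀ i, |x i| ≤ n) :
    -(3 * n ^ 2) ≤ ∑ i, x i * x (i + 1) := by
  -- the cyclic sum is the sum of the triangle sums of `(x₀, x₁, x₂)`, `(x₂, x₃, x₄)` and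
  -- `(x₄, x₀, -x₂)`
  have h₁ := neg_sq_le_mul_add_mul_add_mul (hx 0) (hx 1) (hx 2)
  have h₂ := neg_sq_le_mul_add_mul_add_mul (hx 2) (hx 3) (hx 4)
  have h₃ := neg_sq_le_mul_add_mul_add_mul (hx 4) (hx 0) ((abs_neg (x 2)).trans_le (hx 2))
  simp only [Fin.sum_univ_five, Fin.reduceAdd]
  linarith

variable {n : R} {d : Fin 5 → R}

lemma two_mul_sum_sub_le_sum_mul_succ (hd : ∀ i, d i ∈ Set.Icc 0 (2 * n)) :
    2 * n * ∑ i, d i - 8 * n ^ 2 ≤ ∑ i, d i * d (i + 1) := by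
  have := neg_three_mul_sq_le_sum_mul_succ (x := fun i => d i - n) fun i =>
    abs_le.2 ⟨by linarith [(hd i).1], by linarith [(hd i).2]⟩
  simp only [Fin.sum_univ_five, Fin.reduceAdd] at this ⊢
  linarith

lemma four_mul_sum_sub_le_sum_mul_succ (hd : ∀ i, d i ∈ Set.Icc 0 (2 * n)) :
    4 * n * ∑ i, d i - 20 * n ^ 2 ≤ ∑ i, d i * d (i + 1) := by
  have : 0 ≤ ∑ i, (2 * n - d i) * (2 * n - d (i + 1)) :=
    sum_nonneg fun i _ => mul_nonneg (sub_nonneg.2 (hd i).2) (sub_nonneg.2 (hd (i + 1)).2)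
  simp only [Fin.sum_univ_five, Fin.reduceAdd] at this ⊢
  linarith

lemma thirtySeven_mul_sq_le_mul_sum_add_sum_mul_succ (hd : ∀ i, d i ∈ Set.Icc 0 (2 * n))
    {s : R} (hs : s + ∑ i, d i = 12 * n) (hT : 5 * n ≤ ∑ i, d i) :
    37 * n ^ 2 ≤ s * ∑ i, d i + ∑ i, d i * d (i + 1) := by
  have hT' : ∑ i, d i ≤ 10 * n := by
    have := sum_le_sum fun i (_ : i ∈ univ) => (hd i).2
    simp only [sum_const, card_univ, Fintype.card_fin, nsmul_eq_mul, Nat.cast_ofNat] at this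
    linarith
  rw [show s = 12 * n - ∑ i, d i by linarith]
  -- with `T = ∑ d`, the two cyclic bounds leave `(T - 5n)(9n - T)`,
  -- resp. `(T - 9n)(10n - T) + 3n(11n - T)`
  rcases le_total (∑ i, d i) (9 * n) with h | h
  · nlinarith [two_mul_sum_sub_le_sum_mul_succ hd, mul_nonneg (sub_nonneg.2 hT) (sub_nonneg.2 h)]
  · nlinarith [four_mul_sum_sub_le_sum_mul_succ hd, mul_nonneg (sub_nonneg.2 h) (sub_nonneg.2 hT')]

end CycleSums

section Fibers

variable {V : Type*} [Fintype V] [DecidableEq V] {m : ℕ}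

def fiberCard (A : Finset (V × Fin m)) (u : V) : ℕ := #{x ∈ A | x.1 = u}

lemma sum_fiberCard (A : Finset (V × Fin m)) : ∑ u, fiberCard A u = #A :=
  (card_eq_sum_card_fiberwise fun x _ => mem_univ x.1).symm

lemma sum_comp_fst_eq_sum_fiberCard {M : Type*} [AddCommMonoid M] (A : Finset (V × Fin m))
    (f : V → M) : ∑ x ∈ A, f x.1 = ∑ u, fiberCard A u • f u := by
  rw [← sum_fiberwise A Prod.fst]
  refine sum_congr rfl fun u _ => ?_
  rw [fiberCard, ← sum_const]
  exact sum_congr rfl fun x hx => by rw [(mem_filter.1 hx).2]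

lemma fiberCard_add_fiberCard_compl (A : Finset (V × Fin m)) (u : V) :
    fiberCard A u + fiberCard Aᶜ u = m := by
  rw [fiberCard, fiberCard, ← card_union_of_disjoint (disjoint_filter_filter disjoint_compl_right),
    ← filter_union, union_compl]
  calc #{x ∈ (univ : Finset (V × Fin m)) | x.1 = u}
      = #(univ.map (Function.Embedding.sectR u (Fin m))) := by
        congr 1; ext ⟨v, i⟩; simp [eq_comm]
    _ = m := by simp

lemma fiberCard_compl (A : Finset (V × Fin m)) (u : V) : fiberCard Aᶜ u = m - fiberCard A u := by
  have := fiberCard_add_fiberCard_compl A u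
  omega

lemma fiberCard_le (A : Finset (V × Fin m)) (u : V) : fiberCard A u ≤ m :=
  (Nat.le_add_right _ _).trans_eq (fiberCard_add_fiberCard_compl A u)

lemma fiberCard_filter_lt (k : V → ℕ) (u : V) :
    fiberCard {x : V × Fin m | (x.2 : ℕ) < k x.1} u = min m (k u) := by
  rw [fiberCard, ← Fin.card_filter_val_lt, ← card_map (Function.Embedding.sectR u (Fin m))]
  congr 1
  ext ⟨v, i⟩
  aesop

end Fibers

lemma two_mul_edgesIn {V : Type*} [Fintype V] (G : SimpleGraph V) [DecidableRel G.Adj]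
    (A : Finset V) : 2 * edgesIn G A = #(G.interedges A A) := by
  let H := ((⊤ : G.Subgraph).induce A).spanningCoe
  have hH : ∀ x y, H.Adj x y ↔ G.Adj x y ∧ x ∈ A ∧ y ∈ A := by
    intro x y
    simp only [H, SimpleGraph.Subgraph.spanningCoe_adj, SimpleGraph.Subgraph.induce_adj,
      SetLike.mem_coe, SimpleGraph.Subgraph.top_adj]
    tauto
  have : edgesIn G A = #H.edgeFinset := by
    refine congrArg card (ext fun e => ?_)
    induction e using Sym2.ind
    simp [hH]
  rw [this, H.two_mul_card_edgeFinset]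
  congr 1
  ext ⟨x, y⟩
  simp only [hH, SimpleGraph.interedges, Rel.interedges, mem_filter, mem_univ, mem_product,
    true_and]
  tauto

instance {V : Type*} (G : SimpleGraph V) [DecidableRel G.Adj] (m : ℕ) :
    DecidableRel (blowup G m).Adj :=
  fun x y => inferInstanceAs (Decidable (G.Adj x.1 y.1))

lemma card_interedges_blowup {V : Type*} [Fintype V] [DecidableEq V] (G : SimpleGraph V)
    [DecidableRel G.Adj] {m : ℕ} (A : Finset (V × Fin m)) :
    #((blowup G m).interedges A A) =
      ∑ u, ∑ v, if G.Adj u v then fiberCard A u * fiberCard A v else 0 := by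
  rw [SimpleGraph.interedges, Rel.interedges, card_filter, sum_product]
  calc ∑ x ∈ A, ∑ y ∈ A, (if G.Adj x.1 y.1 then 1 else 0)
      = ∑ x ∈ A, ∑ v, fiberCard A v • (if G.Adj x.1 v then 1 else 0) :=
        sum_congr rfl fun x _ =>
          sum_comp_fst_eq_sum_fiberCard A (fun v => if G.Adj x.1 v then 1 else 0)
    _ = ∑ u, fiberCard A u • ∑ v, fiberCard A v • (if G.Adj u v then 1 else 0) :=
        sum_comp_fst_eq_sum_fiberCard A (fun u => ∑ v, fiberCard A v • if G.Adj u v then 1 else 0)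
    _ = _ := by simp only [smul_eq_mul, mul_sum, mul_ite, mul_one, mul_zero]

instance : DecidableRel HI7C5.Adj := fun x y =>
  decidable_of_iff _ (SimpleGraph.fromRel_adj _ x y).symm

lemma HI7C5_adj_inl_inl (i j : Fin 7) : ¬ HI7C5.Adj (.inl i) (.inl j) := by
  revert i j; decide

lemma HI7C5_adj_inl_inr (i : Fin 7) (j : Fin 5) : HI7C5.Adj (.inl i) (.inr j) := by
  revert i j; decide

lemma HI7C5_adj_inr_inl (i : Fin 5) (j : Fin 7) : HI7C5.Adj (.inr i) (.inl j) := by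
  revert i j; decide

lemma HI7C5_adj_inr_inr (i j : Fin 5) : HI7C5.Adj (.inr i) (.inr j) ↔ j = i + 1 ∨ i = j + 1 := by
  revert i j; decide

lemma sum_sum_ite_HI7C5_adj {R : Type*} [CommSemiring R] (a : Fin 7 ⊕ Fin 5 → R) :
    (∑ u, ∑ v, if HI7C5.Adj u v then a u * a v else 0) =
      2 * ((∑ i, a (.inl i)) * (∑ j, a (.inr j)) + ∑ j, a (.inr j) * a (.inr (j + 1))) := by
  simp only [Fintype.sum_sum_type, HI7C5_adj_inl_inl, HI7C5_adj_inl_inr, HI7C5_adj_inr_inl,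
    HI7C5_adj_inr_inr, if_true, if_false, sum_const_zero, zero_add]
  simp only [← mul_sum, ← sum_mul, sum_add_distrib, Fin.sum_univ_five, Fin.isValue, Fin.reduceAdd,
    Fin.reduceEq, zero_ne_one, one_ne_zero, or_self, or_true, or_false, ↓reduceIte, zero_add,
    add_zero]
  ring

lemma edgesIn_blowup_HI7C5 {m : ℕ} (A : Finset ((Fin 7 ⊕ Fin 5) × Fin m)) :
    edgesIn (blowup HI7C5 m) A =
      (∑ i, fiberCard A (.inl i)) * (∑ j, fiberCard A (.inr j)) +
        ∑ j, fiberCard A (.inr j) * fiberCard A (.inr (j + 1)) := by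
  apply Nat.eq_of_mul_eq_mul_left two_pos
  rw [two_mul_edgesIn, card_interedges_blowup, sum_sum_ite_HI7C5_adj]

lemma thirtySeven_mul_sq_le_edgesIn_blowup_HI7C5 {n : ℕ}
    {A : Finset ((Fin 7 ⊕ Fin 5) × Fin (2 * n))} (hA : #A = 12 * n)
    (hT : 5 * n ≤ ∑ j, fiberCard A (.inr j)) :
    37 * n ^ 2 ≤ edgesIn (blowup HI7C5 (2 * n)) A := by
  have hs : (∑ i, fiberCard A (.inl i)) + ∑ j, fiberCard A (.inr j) = 12 * n := by
    rw [← hA, ← sum_fiberCard, Fintype.sum_sum_type]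
  have := thirtySeven_mul_sq_le_mul_sum_add_sum_mul_succ (n := (n : ℤ))
    (d := fun j => (fiberCard A (.inr j) : ℤ)) (s := ∑ i, (fiberCard A (.inl i) : ℤ))
    (fun j => ⟨by positivity, by exact_mod_cast fiberCard_le A _⟩)
    (by exact_mod_cast hs) (by exact_mod_cast hT)
  rw [edgesIn_blowup_HI7C5]
  exact_mod_cast this

def extremalFiberCard (n : ℕ) : Fin 7 ⊕ Fin 5 → ℕ :=
  Sum.elim ![2 * n, 2 * n, 2 * n, n, 0, 0, 0] ![2 * n, 0, 2 * n, 0, n]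

def extremalPart (n : ℕ) : Finset ((Fin 7 ⊕ Fin 5) × Fin (2 * n)) :=
  {x | (x.2 : ℕ) < extremalFiberCard n x.1}

lemma fiberCard_extremalPart (n : ℕ) : fiberCard (extremalPart n) = extremalFiberCard n := by
  funext u
  rw [extremalPart, fiberCard_filter_lt, min_eq_right]
  rcases u with i | j
  · fin_cases i <;> simp [extremalFiberCard, two_mul]
  · fin_cases j <;> simp [extremalFiberCard, two_mul]

lemma card_extremalPart (n : ℕ) : #(extremalPart n) = 12 * n := by
  rw [← sum_fiberCard, fiberCard_extremalPart, Fintype.sum_sum_type]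
  simp only [extremalFiberCard, Sum.elim_inl, Sum.elim_inr, Fin.sum_univ_seven, Fin.sum_univ_five,
    Fin.isValue, Matrix.cons_val_zero, Matrix.cons_val_one, Matrix.cons_val, add_zero]
  ring

lemma edgesIn_extremalPart (n : ℕ) :
    edgesIn (blowup HI7C5 (2 * n)) (extremalPart n) = 37 * n ^ 2 := by
  rw [edgesIn_blowup_HI7C5, fiberCard_extremalPart]
  simp only [extremalFiberCard, Sum.elim_inl, Sum.elim_inr, Fin.sum_univ_seven, Fin.sum_univ_five,
    Fin.isValue, Fin.reduceAdd, Matrix.cons_val_zero, Matrix.cons_val_one, Matrix.cons_val,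
    add_zero, zero_add, mul_zero, zero_mul]
  ring

lemma edgesIn_compl_extremalPart (n : ℕ) :
    edgesIn (blowup HI7C5 (2 * n)) (extremalPart n)ᶜ = 37 * n ^ 2 := by
  rw [edgesIn_blowup_HI7C5]
  simp only [fiberCard_compl, fiberCard_extremalPart, extremalFiberCard, Sum.elim_inl,
    Sum.elim_inr, Fin.sum_univ_seven, Fin.sum_univ_five, Fin.isValue, Fin.reduceAdd,
    Matrix.cons_val_zero, Matrix.cons_val_one, Matrix.cons_val, tsub_self, tsub_zero,
    show 2 * n - n = n by omega, add_zero, zero_add, mul_zero, zero_mul]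
  ring

theorem stmt_13 (n : ℕ) (hn : 1 ≤ n) :
    (∀ A : Finset ((Fin 7 ⊕ Fin 5) × Fin (2 * n)), A.card = 12 * n →
        max (edgesIn (blowup HI7C5 (2 * n)) A) (edgesIn (blowup HI7C5 (2 * n)) Aᶜ)
          ≥ 37 * n ^ 2) ∧
      (∃ A : Finset ((Fin 7 ⊕ Fin 5) × Fin (2 * n)), A.card = 12 * n ∧
        max (edgesIn (blowup HI7C5 (2 * n)) A) (edgesIn (blowup HI7C5 (2 * n)) Aᶜ)
          = 37 * n ^ 2) ∧
      ((37 * n ^ 2 : ℝ) = 37 / 576 * (24 * n) ^ 2 ∧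
        (37 * n ^ 2 : ℝ) > (24 * n : ℝ) ^ 2 / 16) := by
  refine ⟨fun A hA => ?_, ⟨extremalPart n, card_extremalPart n, ?_⟩, by ring, ?_⟩
  · have hAc : #Aᶜ = 12 * n := by
      rw [card_compl, hA, Fintype.card_prod, Fintype.card_sum, Fintype.card_fin, Fintype.card_fin,
        Fintype.card_fin]
      omega
    have hsplit : ∑ j, fiberCard A (.inr j) + ∑ j, fiberCard Aᶜ (.inr j) = 10 * n := by
      rw [← sum_add_distrib]
      simp only [fiberCard_add_fiberCard_compl, sum_const, card_univ, Fintype.card_fin, smul_eq_mul]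
      ring
    rcases le_total (5 * n) (∑ j, fiberCard A (.inr j)) with h | h
    · exact le_max_of_le_left (thirtySeven_mul_sq_le_edgesIn_blowup_HI7C5 hA h)
    · exact le_max_of_le_right (thirtySeven_mul_sq_le_edgesIn_blowup_HI7C5 hAc (by omega))
  · rw [edgesIn_extremalPart, edgesIn_compl_extremalPart, max_self]
  · have : (1 : ℝ) ≤ n := by exact_mod_cast hn
    nlinarith
end

section
/- Let G be a graph on an even number n of vertices with m edges. Then G admits a balanced bipartition V(G) = A ∪ A^c with |A| = |A^c| = n/2 such that max{e(A), e(A^c)} ≤ (m + Δ(G) − δ(G))/4. -/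
open scoped Classical

/-!
Sort the vertices by degree, `d(v₀) ≤ d(v₁) ≤ ⋯ ≤ d(v_{2k-1})`, and pair `v_{2i}` with
`v_{2i+1}`. Any `A` taking exactly one vertex from each pair is balanced, and the degree sums of
`A` and `Aᶜ` differ by at most `∑ᵢ (d(v_{2i+1}) - d(v_{2i})) ≤ Δ - δ` (a telescoping bound).
Since `∑_{v ∈ A} d(v) = 2 e(A) + e(A, Aᶜ)`, this gives `|2 e(A) - 2 e(Aᶜ)| ≤ Δ - δ`.
Choosing the vertex of each pair uniformly at random, an edge inside a pair always crosses and any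
other edge crosses with probability `1/2`; so some choice has `e(A) + e(Aᶜ) ≤ e(A, Aᶜ)`, i.e.
`2 (e(A) + e(Aᶜ)) ≤ m`. Adding the two inequalities gives `4 e(A) ≤ m + Δ - δ`, and likewise
for `Aᶜ`.
-/

open Finset

lemma Finset.sum_card_eq_sum_card_filter_mem {α S : Type*} [Fintype α] [Fintype S]
    (X : S → Finset α) : ∑ s, #(X s) = ∑ a, #{s | a ∈ X s} := by
  simp only [card_filter]
  rw [sum_comm]
  simp

theorem Monotone.sum_range_odd_sub_even_le {β : Type*} [AddCommGroup β] [PartialOrder β]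
    [IsOrderedAddMonoid β] {f : ℕ → β} (hf : Monotone f) (k : ℕ) :
    ∑ i ∈ range k, (f (2 * i + 1) - f (2 * i)) ≤ f (2 * k) - f 0 := by
  induction k with
  | zero => simp
  | succ k ih =>
    calc ∑ i ∈ range (k + 1), (f (2 * i + 1) - f (2 * i))
        ≤ f (2 * k) - f 0 + (f (2 * k + 1) - f (2 * k)) := by
          rw [sum_range_succ]; exact add_le_add_left ih _
      _ = f (2 * k + 1) - f 0 := by abel
      _ ≤ f (2 * (k + 1)) - f 0 := sub_le_sub_right (hf (by omega)) _

lemma Fintype.exists_equiv_fin_monotone {V α : Type*} [Fintype V] [LinearOrder α] (f : V → α) :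
    ∃ σ : Fin (Fintype.card V) ≃ V, Monotone (f ∘ σ) :=
  let ψ := (Fintype.equivFin V).symm
  ⟨(Tuple.sort (f ∘ ψ)).trans ψ, Tuple.monotone_sort (f ∘ ψ)⟩

theorem Fintype.exists_pairing_sum_abs_sub_le {V β : Type*} [Fintype V] [AddCommGroup β]
    [LinearOrder β] [IsOrderedAddMonoid β] {k : ℕ} (hV : Fintype.card V = 2 * k) (f : V → β)
    {a b : β} (ha : ∀ v, a ≤ f v) (hb : ∀ v, f v ≤ b) (hab : a ≤ b) :
    ∃ e : Fin k × Bool ≃ V, ∑ i, |f (e (i, true)) - f (e (i, false))| ≤ b - a := by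
  obtain ⟨σ, hσ⟩ := Fintype.exists_equiv_fin_monotone f
  -- the sorted values, continued by `b` past the end so as to be monotone on all of `ℕ`
  let F : ℕ → β := fun j => if h : j < Fintype.card V then f (σ ⟨j, h⟩) else b
  have hF : Monotone F := by
    intro j j' hjj'
    simp only [F]
    split_ifs with h h'
    · exact hσ (Fin.mk_le_mk.2 hjj')
    · exact hb _
    · omega
    · rfl
  let τ : Fin k × Bool ≃ Fin (Fintype.card V) :=
    (Equiv.prodCongr (Equiv.refl _) finTwoEquiv.symm).trans
      (finProdFinEquiv.trans (finCongr (by omega)))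
  have hτ : ∀ i c, f (σ (τ (i, c))) = F (2 * i + c.toNat) := by
    intro i c
    have hlt : 2 * (i : ℕ) + c.toNat < Fintype.card V := by
      have := i.2; cases c <;> simp <;> omega
    simp only [F, dif_pos hlt]
    congr 2
    ext
    cases c <;> simp [τ, finTwoEquiv, mul_comm, add_comm]
  refine ⟨τ.trans σ, ?_⟩
  calc ∑ i, |f (σ (τ (i, true))) - f (σ (τ (i, false)))|
      = ∑ i : Fin k, (F (2 * i + 1) - F (2 * i)) := Finset.sum_congr rfl fun i _ => by
        rw [hτ, hτ, Bool.toNat_true, Bool.toNat_false, add_zero,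
          abs_of_nonneg (sub_nonneg.2 (hF (by omega)))]
    _ = ∑ i ∈ range k, (F (2 * i + 1) - F (2 * i)) :=
        Fin.sum_univ_eq_sum_range (fun i => F (2 * i + 1) - F (2 * i)) k
    _ ≤ F (2 * k) - F 0 := hF.sum_range_odd_sub_even_le k
    _ ≤ b - a := by
        refine sub_le_sub (by simp [F, hV]) ?_
        simp only [F]
        split_ifs
        · exact ha _
        · exact hab

section PairSelection

variable {V ι : Type*} [Fintype ι]

/-- `e` splits the vertices into the pairs `{e (i, false), e (i, true)}`; the selection `s`
takes `e (i, s i)` from the `i`-th pair. -/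
def pairSelection (e : ι × Bool ≃ V) (s : ι → Bool) : Finset V :=
  univ.map ⟨fun i => e (i, s i),
    show Function.Injective fun i => e (i, s i) from
      fun _ _ h => congrArg Prod.fst (e.injective h)⟩

variable (e : ι × Bool ≃ V) (s : ι → Bool)

lemma mem_pairSelection {v : V} : v ∈ pairSelection e s ↔ s (e.symm v).1 = (e.symm v).2 := by
  simp only [pairSelection, mem_map, mem_univ, true_and]
  constructor
  · rintro ⟨i, rfl⟩
    simp
  · intro h
    exact ⟨(e.symm v).1, by simp [h]⟩

lemma card_pairSelection : #(pairSelection e s) = Fintype.card ι := by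
  simp [pairSelection]

lemma sum_pairSelection {β : Type*} [AddCommMonoid β] (f : V → β) :
    ∑ v ∈ pairSelection e s, f v = ∑ i, f (e (i, s i)) := by
  simp [pairSelection]

lemma card_filter_mem_mem_le {u v : V} (huv : u ≠ v) :
    #{s : ι → Bool | u ∈ pairSelection e s ∧ v ∈ pairSelection e s}
      ≤ #{s : ι → Bool | u ∈ pairSelection e s ∧ v ∉ pairSelection e s} := by
  simp only [mem_pairSelection]
  set j := (e.symm v).1
  -- Switching the choice in the pair of `v` keeps `u`, which lies in another pair since
  -- the two vertices of one pair are never selected together.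
  refine card_le_card_of_injOn (fun s => Function.update s j (!s j)) ?_ ?_
  · intro s hs
    simp only [coe_filter, Set.mem_ofPred_eq, mem_univ, true_and] at hs ⊢
    have hij : (e.symm u).1 ≠ j := by
      intro hij
      apply huv
      rw [← e.apply_symm_apply u, ← e.apply_symm_apply v]
      congr 1
      exact Prod.ext hij (hs.1.symm.trans (hij ▸ hs.2))
    simp [Function.update_of_ne hij, hs.1, hs.2]
  · intro s _ t _ hst
    simpa using congrArg (fun r => Function.update r j (!r j)) hst

variable [Fintype V]

lemma compl_pairSelection : (pairSelection e s)ᶜ = pairSelection e (fun i => !s i) := by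
  ext v
  rw [mem_compl, mem_pairSelection, mem_pairSelection]
  cases s (e.symm v).1 <;> cases (e.symm v).2 <;> simp

lemma sum_pairSelection_compl {β : Type*} [AddCommMonoid β] (f : Finset V → β) :
    ∑ s, f (pairSelection e s)ᶜ = ∑ s, f (pairSelection e s) := by
  simp_rw [compl_pairSelection]
  have hnot : Function.Involutive fun (s : ι → Bool) i => !s i := fun s => by simp
  exact Fintype.sum_bijective _ hnot.bijective _ _ fun _ => rfl

lemma abs_sum_pairSelection_sub_sum_compl_le {β : Type*} [AddCommGroup β] [LinearOrder β]
    [IsOrderedAddMonoid β] (f : V → β) :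
    |∑ v ∈ pairSelection e s, f v - ∑ v ∈ (pairSelection e s)ᶜ, f v|
      ≤ ∑ i, |f (e (i, true)) - f (e (i, false))| := by
  rw [compl_pairSelection, sum_pairSelection, sum_pairSelection, ← sum_sub_distrib]
  refine (abs_sum_le_sum_abs _ _).trans (sum_le_sum fun i _ => ?_)
  cases s i
  · rw [abs_sub_comm]; rfl
  · rfl

end PairSelection

namespace SimpleGraph

variable {V : Type*} (G : SimpleGraph V)

lemma card_interedges_eq_sum (s t : Finset V) :
    #(G.interedges s t) = ∑ u ∈ s, #(t.filter (G.Adj u)) := by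
  simp only [interedges_def, card_filter, sum_product]

variable [Fintype V]

lemma card_interedges_self_eq_two_mul_edgesIn (A : Finset V) :
    #(G.interedges A A) = 2 * edgesIn G A := by
  let H : SimpleGraph V := ((⊤ : G.Subgraph).induce A).spanningCoe
  have hH : H.edgeFinset = G.edgeFinset.filter fun e => ∀ v ∈ e, v ∈ A := by
    ext e
    induction e with
    | _ u v => simp [H, and_comm, and_assoc]
  rw [edgesIn, ← hH, H.two_mul_card_edgeFinset, interedges_def]
  congr 1
  ext ⟨u, v⟩
  simp [H, and_assoc]

lemma sum_degree_eq_card_interedges_add (A : Finset V) :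
    ∑ v ∈ A, G.degree v = #(G.interedges A A) + #(G.interedges A Aᶜ) := by
  rw [card_interedges_eq_sum, card_interedges_eq_sum, ← sum_add_distrib]
  refine sum_congr rfl fun u _ => ?_
  rw [← card_neighborFinset_eq_degree, neighborFinset_eq_filter]
  simp only [card_filter]
  exact (sum_add_sum_compl A _).symm

lemma card_interedges_compl_comm (A : Finset V) :
    #(G.interedges Aᶜ A) = #(G.interedges A Aᶜ) :=
  have := G.symm
  Rel.card_interedges_comm _ _

lemma sum_degree_compl_eq_card_interedges_add (A : Finset V) :
    ∑ v ∈ Aᶜ, G.degree v = #(G.interedges Aᶜ Aᶜ) + #(G.interedges A Aᶜ) := by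
  rw [sum_degree_eq_card_interedges_add, compl_compl, card_interedges_compl_comm]

theorem max_edgesIn_le {A : Finset V} {D : ℝ}
    (hdeg : |∑ v ∈ A, (G.degree v : ℝ) - ∑ v ∈ Aᶜ, (G.degree v : ℝ)| ≤ D)
    (hcut : edgesIn G A + edgesIn G Aᶜ ≤ #(G.interedges A Aᶜ)) :
    (max (edgesIn G A) (edgesIn G Aᶜ) : ℝ) ≤ (#G.edgeFinset + D) / 4 := by
  have hA : (∑ v ∈ A, G.degree v : ℝ) = 2 * edgesIn G A + #(G.interedges A Aᶜ) := by
    exact_mod_cast G.card_interedges_self_eq_two_mul_edgesIn A ▸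
      G.sum_degree_eq_card_interedges_add A
  have hAc : (∑ v ∈ Aᶜ, G.degree v : ℝ) = 2 * edgesIn G Aᶜ + #(G.interedges A Aᶜ) := by
    exact_mod_cast G.card_interedges_self_eq_two_mul_edgesIn Aᶜ ▸
      G.sum_degree_compl_eq_card_interedges_add A
  have htotal : ∑ v ∈ A, (G.degree v : ℝ) + ∑ v ∈ Aᶜ, (G.degree v : ℝ) = 2 * #G.edgeFinset := by
    exact_mod_cast (sum_add_sum_compl A _).trans G.sum_degrees_eq_twice_card_edges
  have hcut' : (edgesIn G A + edgesIn G Aᶜ : ℝ) ≤ #(G.interedges A Aᶜ) := by exact_mod_cast hcut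
  obtain ⟨hlo, hhi⟩ := abs_le.mp hdeg
  apply max_le <;> linarith

lemma sum_card_interedges_self_le {S : Type*} [Fintype S] (A : S → Finset V)
    (h : ∀ u v, G.Adj u v → #{s | u ∈ A s ∧ v ∈ A s} ≤ #{s | u ∈ A s ∧ v ∉ A s}) :
    ∑ s, #(G.interedges (A s) (A s)) ≤ ∑ s, #(G.interedges (A s) (A s)ᶜ) := by
  rw [sum_card_eq_sum_card_filter_mem fun s => G.interedges (A s) (A s),
    sum_card_eq_sum_card_filter_mem fun s => G.interedges (A s) (A s)ᶜ]
  refine sum_le_sum fun ⟨u, v⟩ _ => ?_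
  simp only [mk_mem_interedges_iff, mem_compl]
  by_cases huv : G.Adj u v
  · simpa [huv] using h u v huv
  · simp [huv]

lemma exists_pairSelection_edgesIn_add_le {ι : Type*} [Fintype ι] (e : ι × Bool ≃ V) :
    ∃ s, edgesIn G (pairSelection e s) + edgesIn G (pairSelection e s)ᶜ
      ≤ #(G.interedges (pairSelection e s) (pairSelection e s)ᶜ) := by
  have hsum := G.sum_card_interedges_self_le (pairSelection e)
    fun u v huv => card_filter_mem_mem_le e huv.ne
  obtain ⟨s, -, hs⟩ := exists_le_of_sum_le univ_nonempty
    (f := fun s => #(G.interedges (pairSelection e s) (pairSelection e s))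
      + #(G.interedges (pairSelection e s)ᶜ (pairSelection e s)ᶜ))
    (g := fun s => 2 * #(G.interedges (pairSelection e s) (pairSelection e s)ᶜ))
    (by rw [sum_add_distrib, sum_pairSelection_compl e fun A => #(G.interedges A A), ← mul_sum]
        omega)
  refine ⟨s, ?_⟩
  rw [G.card_interedges_self_eq_two_mul_edgesIn, G.card_interedges_self_eq_two_mul_edgesIn] at hs
  omega

end SimpleGraph

theorem stmt_14 {V : Type*} [Fintype V] (G : SimpleGraph V)
    (heven : Even (Fintype.card V)) :
    ∃ A : Finset V, 2 * A.card = Fintype.card V ∧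
      (max (edgesIn G A) (edgesIn G Aᶜ) : ℝ) ≤
        (G.edgeFinset.card + G.maxDegree - G.minDegree : ℝ) / 4 := by
  obtain ⟨k, hk⟩ := heven
  obtain ⟨e, he⟩ := Fintype.exists_pairing_sum_abs_sub_le (by omega : Fintype.card V = 2 * k)
    (fun v => (G.degree v : ℝ)) (a := G.minDegree) (b := G.maxDegree)
    (fun v => by exact_mod_cast G.minDegree_le_degree v)
    (fun v => by exact_mod_cast G.degree_le_maxDegree v)
    (by exact_mod_cast G.minDegree_le_maxDegree)
  obtain ⟨s, hs⟩ := G.exists_pairSelection_edgesIn_add_le e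
  refine ⟨pairSelection e s, by rw [card_pairSelection, Fintype.card_fin]; omega, ?_⟩
  rw [add_sub_assoc]
  exact G.max_edgesIn_le ((abs_sum_pairSelection_sub_sum_compl_le e s _).trans he) hs
end

section
/- Let G be a K4-free graph on n > 10^5 vertices, n even, containing an independent set I of size 0.28n, and suppose that every triangle-free induced subgraph of G − I has at most 0.45n vertices. Then e(G) ≤ 0.288n². -/
open scoped Classical

lemma induce_cliqueFree_of_cliqueFreeOn {V : Type*} (G : SimpleGraph V) {s : Set V} {n : ℕ}
    (h : G.CliqueFreeOn s n) : (G.induce s).CliqueFree n := by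
  intro t ht
  refine h (t := t.map (Function.Embedding.subtype _)) ?_ ?_
  · intro x hx
    simp only [Finset.coe_map, Set.mem_image, Finset.mem_coe] at hx
    obtain ⟨⟨y, hy⟩, _, rfl⟩ := hx
    exact hy
  · constructor
    · intro a ha b hb hab
      simp only [Finset.coe_map, Set.mem_image, Finset.mem_coe] at ha hb
      obtain ⟨x, hx, rfl⟩ := ha
      obtain ⟨y, hy, rfl⟩ := hb
      have : x ≠ y := fun h => hab (by rw [h])
      exact ht.1 hx hy this
    · rw [Finset.card_map]; exact ht.2

lemma nbhd_cliqueFree {V : Type*} (G : SimpleGraph V) (hG : G.CliqueFree 4) (v : V)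
    {s : Set V} (hs : s ⊆ G.neighborSet v) : (G.induce s).CliqueFree 3 := by
  apply induce_cliqueFree_of_cliqueFreeOn
  have h1 : G.CliqueFreeOn Set.univ (3 + 1) := hG.cliqueFreeOn
  have h2 := SimpleGraph.CliqueFreeOn.of_succ G h1 (Set.mem_univ v)
  rw [Set.univ_inter] at h2
  exact SimpleGraph.CliqueFreeOn.subset G hs h2

theorem stmt_17 {V : Type*} [Fintype V] (G : SimpleGraph V)
    (hG : G.CliqueFree 4)
    (hn : Fintype.card V > 10 ^ 5) (heven : Even (Fintype.card V))
    (I : Finset V) (hI : ∀ v ∈ I, ∀ w ∈ I, ¬G.Adj v w)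
    (hIcard : (I.card : ℝ) = 0.28 * Fintype.card V)
    (hZ : ∀ Z : Finset V, Disjoint Z I → (G.induce (Z : Set V)).CliqueFree 3 →
      (Z.card : ℝ) ≤ 0.45 * Fintype.card V) :
    (G.edgeFinset.card : ℝ) ≤ 0.288 * (Fintype.card V : ℝ) ^ 2 := by
  set n : ℕ := Fintype.card V with hn'
  -- bound for neighborhoods minus I
  have key1 : ∀ v : V, ((G.neighborFinset v \ I).card : ℝ) ≤ 0.45 * n := by
    intro v
    apply hZ _ Finset.sdiff_disjoint
    apply nbhd_cliqueFree G hG v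
    intro x hx
    have : x ∈ G.neighborFinset v \ I := by exact_mod_cast hx
    simpa using (Finset.mem_sdiff.mp this).1
  -- bound for neighborhoods of vertices in I
  have key2 : ∀ u ∈ I, ((G.neighborFinset u).card : ℝ) ≤ 0.45 * n := by
    intro u hu
    apply hZ _ ?_ ?_
    · rw [Finset.disjoint_left]
      intro x hx hxI
      exact hI u hu x hxI (by simpa using hx)
    · apply nbhd_cliqueFree G hG u
      intro x hx
      simpa using (by exact_mod_cast hx : x ∈ G.neighborFinset u)
  -- double counting
  have split : ∀ v : V, G.degree v = (G.neighborFinset v \ I).card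
      + (G.neighborFinset v ∩ I).card := by
    intro v
    rw [Finset.card_sdiff_add_card_inter, SimpleGraph.degree]
  have inter_eq : ∀ v : V, (G.neighborFinset v ∩ I).card
      = ∑ u ∈ I, if G.Adj v u then 1 else 0 := by
    intro v
    rw [Finset.inter_comm, ← Finset.filter_mem_eq_inter]
    rw [Finset.card_filter]
    apply Finset.sum_congr rfl
    intro u hu
    simp [SimpleGraph.mem_neighborFinset]
  have swap : ∑ v : V, ((G.neighborFinset v ∩ I).card : ℕ)
      = ∑ u ∈ I, G.degree u := by
    simp only [inter_eq]
    rw [Finset.sum_comm]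
    apply Finset.sum_congr rfl
    intro u hu
    rw [← Finset.card_filter, SimpleGraph.degree]
    congr 1
    ext x
    simp [SimpleGraph.mem_neighborFinset, SimpleGraph.adj_comm]
  -- combine
  have h2e : (2 * G.edgeFinset.card : ℝ) ≤ 0.45 * n * n + 0.28 * n * (0.45 * n) := by
    have hsum : 2 * G.edgeFinset.card = ∑ v : V, G.degree v :=
      (SimpleGraph.sum_degrees_eq_twice_card_edges G).symm
    have : (∑ v : V, (G.degree v : ℝ))
        = ∑ v : V, ((G.neighborFinset v \ I).card : ℝ)
          + ∑ v : V, ((G.neighborFinset v ∩ I).card : ℝ) := by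
      rw [← Finset.sum_add_distrib]
      apply Finset.sum_congr rfl
      intro v _
      rw [split v]
      push_cast
      ring
    have b1 : ∑ v : V, ((G.neighborFinset v \ I).card : ℝ) ≤ 0.45 * n * n := by
      calc ∑ v : V, ((G.neighborFinset v \ I).card : ℝ)
          ≤ ∑ _v : V, (0.45 * n : ℝ) := Finset.sum_le_sum (fun v _ => key1 v)
        _ = 0.45 * n * n := by
            rw [Finset.sum_const, Finset.card_univ, ← hn']
            ring
    have b2 : ∑ v : V, ((G.neighborFinset v ∩ I).card : ℝ) ≤ 0.28 * n * (0.45 * n) := by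
      have : ∑ v : V, ((G.neighborFinset v ∩ I).card : ℝ) = ∑ u ∈ I, (G.degree u : ℝ) := by
        exact_mod_cast congrArg (Nat.cast : ℕ → ℝ) swap
      rw [this]
      calc ∑ u ∈ I, (G.degree u : ℝ)
          ≤ ∑ _u ∈ I, (0.45 * n : ℝ) := Finset.sum_le_sum (fun u hu => key2 u hu)
        _ = I.card * (0.45 * n) := by rw [Finset.sum_const]; ring
        _ = 0.28 * n * (0.45 * n) := by rw [hIcard]
    calc (2 * G.edgeFinset.card : ℝ) = ∑ v : V, (G.degree v : ℝ) := by
          rw [← Nat.cast_sum, ← hsum]; push_cast; ring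
      _ = _ := this
      _ ≤ 0.45 * n * n + 0.28 * n * (0.45 * n) := add_le_add b1 b2
  nlinarith [h2e, sq_nonneg (n : ℝ)]
end
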